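/- arXiv:2002.09115 — 2 statements merged into one kernel-verified Lean document; each statement's English description precedes it below -/
import Mathlib

section
/- If R is a bisimulation between a concrete labelled transition system and a symbolic labelled transition system (parameterised by models M), and ρ R_M ρ_s, then ρ reaches a failing configuration via O-refreshing transitions if and only if ρ_s reaches a failing symbolic configuration (for some extension of the model). -/
/-- if `R` is a bisimulation (indexed by models `Mo` ordered by the
extension relation `ext`) between a concrete LTS (whose steps are the
O-refreshing transitions) and a symbolic LTS, and `R` preserves the failing
predicates, then a configuration related to a symbolic one reaches a failing
configuration via O-refreshing transitions iff the symbolic one reaches a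
failing symbolic configuration. -/
theorem stmt3 {C Sy Mo Lc Ls : Type*}
    (stepC : C → Lc → C → Prop) (stepS : Sy → Ls → Sy → Prop)
    (ext : Mo → Mo → Prop) (app : Ls → Mo → Lc)
    (failC : C → Prop) (failS : Sy → Prop)
    (R : C → Mo → Sy → Prop)
    (hfwd : ∀ ρ m ρs χ ρ', R ρ m ρs → stepC ρ χ ρ' →
      ∃ m' χs ρs', ext m m' ∧ stepS ρs χs ρs' ∧ χ = app χs m' ∧ R ρ' m' ρs')
    (hbwd : ∀ ρ m ρs χs ρs', R ρ m ρs → stepS ρs χs ρs' →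
      ∃ m' ρ', ext m m' ∧ stepC ρ (app χs m') ρ' ∧ R ρ' m' ρs')
    (hfail : ∀ ρ m ρs, R ρ m ρs → (failC ρ ↔ failS ρs))
    (ρ : C) (m : Mo) (ρs : Sy) (hR : R ρ m ρs) :
    (∃ ρ', Relation.ReflTransGen (fun a b => ∃ χ, stepC a χ b) ρ ρ' ∧ failC ρ') ↔
    (∃ ρs', Relation.ReflTransGen (fun a b => ∃ χ, stepS a χ b) ρs ρs' ∧ failS ρs') := by
  have fwd : ∀ ρ ρ', Relation.ReflTransGen (fun a b => ∃ χ, stepC a χ b) ρ ρ' →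
      ∀ m ρs, R ρ m ρs → ∃ m' ρs',
        Relation.ReflTransGen (fun a b => ∃ χ, stepS a χ b) ρs ρs' ∧ R ρ' m' ρs' := by
    intro ρ ρ' h
    induction h with
    | refl => exact fun m ρs hR => ⟨m, ρs, .refl, hR⟩
    | tail _ hstep ih =>
      intro m ρs hR
      obtain ⟨m1, ρs1, hsteps, hR1⟩ := ih m ρs hR
      obtain ⟨χ, hstep⟩ := hstep
      obtain ⟨m2, χs, ρs2, _, hs, _, hR2⟩ := hfwd _ _ _ _ _ hR1 hstep
      exact ⟨m2, ρs2, hsteps.tail ⟨χs, hs⟩, hR2⟩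
  have bwd : ∀ ρs ρs', Relation.ReflTransGen (fun a b => ∃ χ, stepS a χ b) ρs ρs' →
      ∀ m ρ, R ρ m ρs → ∃ m' ρ',
        Relation.ReflTransGen (fun a b => ∃ χ, stepC a χ b) ρ ρ' ∧ R ρ' m' ρs' := by
    intro ρs ρs' h
    induction h with
    | refl => exact fun m ρ hR => ⟨m, ρ, .refl, hR⟩
    | tail _ hstep ih =>
      intro m ρ hR
      obtain ⟨m1, ρ1, hsteps, hR1⟩ := ih m ρ hR
      obtain ⟨χs, hstep⟩ := hstep
      obtain ⟨m2, ρ2, _, hs, hR2⟩ := hbwd _ _ _ _ _ hR1 hstep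
      exact ⟨m2, ρ2, hsteps.tail ⟨_, hs⟩, hR2⟩
  constructor
  · rintro ⟨ρ', hsteps, hf⟩
    obtain ⟨m', ρs', hs, hR'⟩ := fwd _ _ hsteps m ρs hR
    exact ⟨ρs', hs, (hfail _ _ _ hR').mp hf⟩
  · rintro ⟨ρs', hsteps, hf⟩
    obtain ⟨m', ρ', hs, hR'⟩ := bwd _ _ hsteps m ρ hR
    exact ⟨ρ', hs, (hfail _ _ _ hR').mpr hf⟩
end

section
/- Equality of configurations under a model (=_M) together with the bisimulation transfer conditions implies that the concrete O-refreshing trace set of ρ equals, up to model application, the symbolic trace set of ρ_s: for every symbolic trace τ_s of ρ_s with satisfiable final path condition there exists a model M' extending M such that τ_s{M'} is a concrete O-refreshing trace of ρ, and conversely. -/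
/-- Finite traces of a labelled transition system. -/
inductive LTrace {S L : Type*} (step : S → L → S → Prop) : S → List L → Prop
  | nil (s : S) : LTrace step s []
  | cons {s : S} {l : L} {s' : S} {τ : List L} :
      step s l s' → LTrace step s' τ → LTrace step s (l :: τ)

/-- if `R` is a bisimulation between the concrete (O-refreshing)
and symbolic LTSs and ρ =_M ρ_s (so ρ ∼_M ρ_s), then for every symbolic trace
τ_s of ρ_s there is a model M' extending M such that τ_s{M'} is a concrete
O-refreshing trace of ρ, and conversely every concrete O-refreshing trace of ρ
is of the form τ_s{M'} for some symbolic trace τ_s of ρ_s and extension M'. -/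
theorem stmt16 {C Sy Mo Lc Ls : Type*}
    (stepC : C → Lc → C → Prop) (stepS : Sy → Ls → Sy → Prop)
    (ext : Mo → Mo → Prop) (app : Ls → Mo → Lc)
    (extRefl : ∀ m, ext m m)
    (extTrans : ∀ {a b c}, ext a b → ext b c → ext a c)
    (happ : ∀ (χs : Ls) (m m' : Mo), ext m m' → app χs m = app χs m')
    (R : C → Mo → Sy → Prop)
    (hfwd : ∀ ρ m ρs χ ρ', R ρ m ρs → stepC ρ χ ρ' →
      ∃ m' χs ρs', ext m m' ∧ stepS ρs χs ρs' ∧ χ = app χs m' ∧ R ρ' m' ρs')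
    (hbwd : ∀ ρ m ρs χs ρs', R ρ m ρs → stepS ρs χs ρs' →
      ∃ m' ρ', ext m m' ∧ stepC ρ (app χs m') ρ' ∧ R ρ' m' ρs')
    (ρ : C) (m : Mo) (ρs : Sy) (hR : R ρ m ρs) :
    (∀ τs : List Ls, LTrace stepS ρs τs →
      ∃ m', ext m m' ∧ LTrace stepC ρ (τs.map (fun χ => app χ m'))) ∧
    (∀ τ : List Lc, LTrace stepC ρ τ →
      ∃ (m' : Mo) (τs : List Ls), ext m m' ∧ LTrace stepS ρs τs ∧
        τ = τs.map (fun χ => app χ m')) := by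
  constructor
  · intro τs hτs
    induction hτs generalizing ρ m with
    | nil ρs => exact ⟨m, extRefl m, LTrace.nil ρ⟩
    | @cons ρs χs ρs' τs hstep htr ih =>
      obtain ⟨m', ρ', hext, hstepC, hR'⟩ := hbwd ρ m ρs χs ρs' hR hstep
      obtain ⟨m'', hext', htrC⟩ := ih ρ' m' hR'
      refine ⟨m'', extTrans hext hext', ?_⟩
      simpa [happ χs m' m'' hext'] using LTrace.cons hstepC htrC
  · intro τ hτ
    induction hτ generalizing ρs m with
    | nil ρ => exact ⟨m, [], extRefl m, LTrace.nil ρs, rfl⟩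
    | @cons ρ χ ρ' τ hstep htr ih =>
      obtain ⟨m', χs, ρs', hext, hstepS, heq, hR'⟩ := hfwd ρ m ρs χ ρ' hR hstep
      obtain ⟨m'', τs, hext', htrS, heq'⟩ := ih m' ρs' hR'
      refine ⟨m'', χs :: τs, extTrans hext hext', LTrace.cons hstepS htrS, ?_⟩
      simp [heq', heq, happ χs m' m'' hext']
end
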